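/- Consider the generalized Pólya urn: start with b black and w white balls; at each step draw a ball, return it with another of the same color, and additionally insert black balls at arbitrary deterministic times so the total count Bₙ after n draws is a strictly increasing sequence with B₀ = b + w. Let qₙ(k) = P[Nₙ = k] where Nₙ is the number of white balls after n draws. Then for every n ≥ 0 and every k, qₙ(k)² ≥ qₙ(k−1)·qₙ(k+1); i.e., the distribution of Nₙ is log-concave in k. -/

import Mathlib

/-!
Clearing denominators, `Bₙ qₙ₊₁(k) = (k-1) qₙ(k-1) + (Bₙ-k) qₙ(k)`, and by induction `qₙ` is positive
exactly on `[w, w+n]`. Where `qₙ₊₁(k-1) qₙ₊₁(k+1) ≠ 0` one has `x = k-1 ≥ 1` and `y = Bₙ-k ≥ 1`, and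
with `a, b, c, d = qₙ(k-2), …, qₙ(k+1)`
`Bₙ² (qₙ₊₁(k)² - qₙ₊₁(k-1) qₙ₊₁(k+1)) = (x²-1)(b²-ac) + (y²-1)(c²-bd) + (x-1)(y-1)(bc-ad) + (b-c)²`,
each term of which is nonnegative by log-concavity of `qₙ` (for `bc - ad`, multiply `ac ≤ b²` by
`bd ≤ c²`).
-/

lemma sq_sub_mul_eq_of_shifted_weights (a b c d x y : ℝ) :
    (x * b + y * c) ^ 2 - ((x - 1) * a + (y + 1) * b) * ((x + 1) * c + (y - 1) * d)
      = (x ^ 2 - 1) * (b ^ 2 - a * c) + (y ^ 2 - 1) * (c ^ 2 - b * d)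
        + (x - 1) * (y - 1) * (b * c - a * d) + (b - c) ^ 2 := by
  ring

lemma mul_le_sq_of_shifted_weights {a b c d x y : ℝ} (hx : 1 ≤ x) (hy : 1 ≤ y)
    (hac : a * c ≤ b ^ 2) (hbd : b * d ≤ c ^ 2) (had : a * d ≤ b * c) :
    ((x - 1) * a + (y + 1) * b) * ((x + 1) * c + (y - 1) * d) ≤ (x * b + y * c) ^ 2 := by
  rw [← sub_nonneg, sq_sub_mul_eq_of_shifted_weights]
  have hac' : 0 ≤ (x ^ 2 - 1) * (b ^ 2 - a * c) := mul_nonneg (by nlinarith) (sub_nonneg.2 hac)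
  have hbd' : 0 ≤ (y ^ 2 - 1) * (c ^ 2 - b * d) := mul_nonneg (by nlinarith) (sub_nonneg.2 hbd)
  have had' : 0 ≤ (x - 1) * (y - 1) * (b * c - a * d) :=
    mul_nonneg (mul_nonneg (by linarith) (by linarith)) (sub_nonneg.2 had)
  have := sq_nonneg (b - c)
  linarith

lemma mul_le_mul_of_mul_le_sq {a b c d : ℝ} (hb : 0 < b) (hc : 0 < c) (hd : 0 ≤ d)
    (hac : a * c ≤ b ^ 2) (hbd : b * d ≤ c ^ 2) : a * d ≤ b * c := by
  refine le_of_mul_le_mul_right ?_ (mul_pos hb hc)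
  calc a * d * (b * c) = (a * c) * (b * d) := by ring
    _ ≤ b ^ 2 * c ^ 2 := mul_le_mul hac hbd (mul_nonneg hb.le hd) (sq_nonneg b)
    _ = b * c * (b * c) := by ring

/-- Law of the white count after one reinforced draw from an urn of `β` balls whose white count has
law `p`. -/
noncomputable def urnStep (β : ℝ) (p : ℤ → ℝ) (k : ℤ) : ℝ :=
  (((k : ℝ) - 1) * p (k - 1) + (β - k) * p k) / β

lemma urnStep_eq_of_ne_zero {β : ℝ} (hβ : β ≠ 0) (p : ℤ → ℝ) (k : ℤ) :
    urnStep β p k = ((k : ℝ) - 1) / β * p (k - 1) + (1 - (k : ℝ) / β) * p k := by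
  unfold urnStep
  field_simp

lemma urnStep_mul_urnStep_le_sq {β : ℝ} {p : ℤ → ℝ} {k : ℤ}
    (hp : ∀ j, p (j - 1) * p (j + 1) ≤ p j ^ 2) (hk : (2 : ℝ) ≤ k) (hkβ : (k : ℝ) + 1 ≤ β)
    (hb : 0 < p (k - 1)) (hc : 0 < p k) (hd : 0 ≤ p (k + 1)) :
    urnStep β p (k - 1) * urnStep β p (k + 1) ≤ urnStep β p k ^ 2 := by
  have hac := hp (k - 1)
  rw [sub_add_cancel] at hac
  have key := mul_le_sq_of_shifted_weights (x := (k : ℝ) - 1) (y := β - k) (by linarith)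
    (by linarith) hac (hp k) (mul_le_mul_of_mul_le_sq hb hc hd hac (hp k))
  unfold urnStep
  rw [add_sub_cancel_right, div_mul_div_comm, div_pow, ← sq]
  refine div_le_div_of_nonneg_right ?_ (sq_nonneg _)
  push_cast
  linear_combination key

section Urn

variable {w : ℕ} {B : ℕ → ℕ} {q : ℕ → ℤ → ℝ}

lemma urn_eq_zero_off_support (hq0 : ∀ k : ℤ, q 0 k = if k = (w : ℤ) then 1 else 0)
    (hstep : ∀ n, q (n + 1) = urnStep (B n) (q n))
    (n : ℕ) (k : ℤ) (hk : ¬ ((w : ℤ) ≤ k ∧ k ≤ w + n)) : q n k = 0 := by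
  induction n generalizing k with
  | zero => rw [hq0, if_neg (by push_cast at hk; omega)]
  | succ m ih =>
    push_cast at hk
    rw [hstep, urnStep, ih (k - 1) (by omega), ih k (by omega)]
    simp

lemma urn_pos_on_support (hw : 1 ≤ w) (hBw : ∀ n : ℕ, (w : ℤ) + n < B n)
    (hq0 : ∀ k : ℤ, q 0 k = if k = (w : ℤ) then 1 else 0)
    (hstep : ∀ n, q (n + 1) = urnStep (B n) (q n))
    (n : ℕ) (k : ℤ) (hk : (w : ℤ) ≤ k ∧ k ≤ w + n) : 0 < q n k := by
  induction n generalizing k with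
  | zero => rw [hq0, if_pos (by push_cast at hk; omega)]; exact one_pos
  | succ m ih =>
    have hnonneg : ∀ j, 0 ≤ q m j := fun j => by
      by_cases hj : (w : ℤ) ≤ j ∧ j ≤ w + m
      · exact (ih j hj).le
      · exact (urn_eq_zero_off_support hq0 hstep m j hj).ge
    have hB : (0 : ℝ) < B m := by have := hBw m; exact_mod_cast (show (0 : ℤ) < B m by omega)
    obtain ⟨hwk, hkn⟩ := hk
    push_cast at hkn
    rw [hstep, urnStep]
    refine div_pos ?_ hB
    by_cases hkm : k ≤ w + m
    · have hk1 : (1 : ℝ) ≤ k := by exact_mod_cast (show (1 : ℤ) ≤ k by omega)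
      have hBk : (k : ℝ) < B m := by exact_mod_cast (show k < B m by have := hBw m; omega)
      have := ih k ⟨hwk, hkm⟩
      have := hnonneg (k - 1)
      nlinarith
    · have hk2 : (2 : ℝ) ≤ k := by exact_mod_cast (show (2 : ℤ) ≤ k by omega)
      have := ih (k - 1) ⟨by omega, by omega⟩
      rw [urn_eq_zero_off_support hq0 hstep m k (by omega)]
      nlinarith

lemma urn_logConcave (hw : 1 ≤ w) (hBw : ∀ n : ℕ, (w : ℤ) + n < B n)
    (hq0 : ∀ k : ℤ, q 0 k = if k = (w : ℤ) then 1 else 0)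
    (hstep : ∀ n, q (n + 1) = urnStep (B n) (q n))
    (n : ℕ) (k : ℤ) : q n (k - 1) * q n (k + 1) ≤ q n k ^ 2 := by
  have hzero := urn_eq_zero_off_support hq0 hstep
  have hpos := urn_pos_on_support hw hBw hq0 hstep
  have hedge : ∀ (n : ℕ) (k : ℤ), ¬ ((w : ℤ) ≤ k - 1 ∧ k + 1 ≤ w + n) →
      q n (k - 1) * q n (k + 1) ≤ q n k ^ 2 := fun n k hk => by
    by_cases hlo : (w : ℤ) ≤ k - 1
    · rw [hzero n (k + 1) (by omega), mul_zero]; exact sq_nonneg _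
    · rw [hzero n (k - 1) (by omega), zero_mul]; exact sq_nonneg _
  induction n generalizing k with
  | zero => exact hedge 0 k (by omega)
  | succ m ih =>
    by_cases hint : (w : ℤ) ≤ k - 1 ∧ k + 1 ≤ w + (m + 1 : ℕ)
    swap
    · exact hedge _ k hint
    push_cast at hint
    have hk : (2 : ℝ) ≤ k := by exact_mod_cast (show (2 : ℤ) ≤ k by omega)
    have hkB : (k : ℝ) + 1 ≤ B m := by
      exact_mod_cast (show k + 1 ≤ (B m : ℤ) by have := hBw m; omega)
    have hd : 0 ≤ q m (k + 1) := by
      by_cases hj : (w : ℤ) ≤ k + 1 ∧ k + 1 ≤ w + m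
      · exact (hpos m _ hj).le
      · exact (hzero m _ hj).ge
    rw [hstep]
    exact urnStep_mul_urnStep_le_sq ih hk hkB (hpos m (k - 1) ⟨by omega, by omega⟩)
      (hpos m k ⟨by omega, by omega⟩) hd

end Urn

theorem stmt17 (b w : ℕ) (hb : 1 ≤ b) (hw : 1 ≤ w) (B : ℕ → ℕ) (hB : StrictMono B)
    (hB0 : B 0 = b + w) (q : ℕ → ℤ → ℝ)
    (hq0 : ∀ k : ℤ, q 0 k = if k = (w : ℤ) then 1 else 0)
    (hrec : ∀ n : ℕ, ∀ k : ℤ,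
      q (n + 1) k = ((k : ℝ) - 1) / (B n) * q n (k - 1) + (1 - (k : ℝ) / (B n)) * q n k) :
    ∀ n : ℕ, ∀ k : ℤ, q n (k - 1) * q n (k + 1) ≤ (q n k) ^ 2 := by
  have hBw : ∀ n : ℕ, (w : ℤ) + n < B n := fun n => by
    have := hB.add_le_nat n 0
    rw [add_zero, hB0] at this
    omega
  have hstep : ∀ n, q (n + 1) = urnStep (B n) (q n) := fun n => funext fun k => by
    rw [hrec, urnStep_eq_of_ne_zero (by have := hBw n; exact_mod_cast (show (B n : ℤ) ≠ 0 by omega))]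
  exact urn_logConcave hw hBw hq0 hstep
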